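/- (Telescoping value decomposition) For a policy π and two transition kernels T_1, T_2 with the same reward R and discount γ, define Z_k as the expected discounted return when the first k steps use T_1 and all later steps use T_2. Then V^π_{T_1} - V^π_{T_2} = Σ_{k=0}^∞ (Z_{k+1} - Z_k), and each term satisfies Z_{k+1} - Z_k = γ^{k+1} E_{s_k,a_k ~ π, T_1} [ E_{s' ~ T_1(s_k,a_k)} V^π_{T_2}(s') - E_{s'' ~ T_2(s_k,a_k)} V^π_{T_2}(s'') ]. -/
import Mathlib



lemma tvd_swap {S A : Type*} [Fintype S] [Fintype A]
    (T : S → A → S → ℝ) (π : S → A → ℝ) (V : S → ℝ) (w : S → ℝ) :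
    ∑ s', (∑ s, ∑ a, w s * π s a * T s a s') * V s'
      = ∑ s, ∑ a, w s * π s a * ∑ s', T s a s' * V s' := by
  simp only [Finset.sum_mul, Finset.mul_sum]
  rw [Finset.sum_comm]
  refine Finset.sum_congr rfl fun s _ => ?_
  rw [Finset.sum_comm]
  exact Finset.sum_congr rfl fun a _ => Finset.sum_congr rfl fun s' _ => by ring

/-- Algebraic step: push one Bellman step through a weighting `w`. -/
lemma tvd_step {S A : Type*} [Fintype S] [Fintype A]
    (T : S → A → S → ℝ) (R : S → A → ℝ) (γ : ℝ) (π : S → A → ℝ) (V : S → ℝ)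
    (hB : ∀ s, V s = ∑ a, π s a * (R s a + γ * ∑ s', T s a s' * V s'))
    (w : S → ℝ) :
    ∑ s, w s * V s = (∑ s, ∑ a, w s * π s a * R s a)
      + γ * ∑ s', (∑ s, ∑ a, w s * π s a * T s a s') * V s' := by
  rw [tvd_swap]
  rw [show γ * ∑ s, ∑ a, w s * π s a * ∑ s', T s a s' * V s'
      = ∑ s, ∑ a, γ * (w s * π s a * ∑ s', T s a s' * V s') by
    rw [Finset.mul_sum]; exact Finset.sum_congr rfl fun s _ => Finset.mul_sum ..]
  rw [← Finset.sum_add_distrib]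
  refine Finset.sum_congr rfl fun s _ => ?_
  rw [hB s, Finset.mul_sum, ← Finset.sum_add_distrib]
  exact Finset.sum_congr rfl fun a _ => by ring

set_option maxHeartbeats 2000000 in
/-- Telescoping value decomposition.
Fix a stationary policy `π`, two transition kernels `T₁, T₂` with the same bounded
reward `R` and discount `γ ∈ [0,1)`, and an initial state `s₀`. Let `ρ k` be the state
distribution after `k` steps of following `π` under `T₁` starting from `s₀`, and let
`Z k` be the expected discounted return when the first `k` steps use `T₁` and all later
steps use `T₂` (so `Z 0 = V^π_{T₂}(s₀)` and `Z k → V^π_{T₁}(s₀)`). Then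
`V^π_{T₁}(s₀) - V^π_{T₂}(s₀) = ∑_{k=0}^∞ (Z(k+1) - Z k)` (the series sums to the value
gap), and each term satisfies
`Z(k+1) - Z k = γ^{k+1} E_{s_k ~ ρ k, a ~ π}[E_{s'~T₁(s_k,a)} V^π_{T₂}(s')
  - E_{s''~T₂(s_k,a)} V^π_{T₂}(s'')]`. -/
theorem telescoping_value_decomposition
    {S A : Type*} [Fintype S] [Fintype A] [DecidableEq S] [Nonempty S] [Nonempty A]
    (T₁ T₂ : S → A → S → ℝ) (R : S → A → ℝ) (γ : ℝ) (hγ0 : 0 ≤ γ) (hγ1 : γ < 1)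
    (π : S → A → ℝ) (s₀ : S)
    (hπ : ∀ s, (∀ a, 0 ≤ π s a) ∧ (∑ a, π s a) = 1)
    (hT₁ : ∀ s a, (∀ s', 0 ≤ T₁ s a s') ∧ (∑ s', T₁ s a s') = 1)
    (hT₂ : ∀ s a, (∀ s', 0 ≤ T₂ s a s') ∧ (∑ s', T₂ s a s') = 1)
    (V₁ V₂ : S → ℝ)
    -- Bellman evaluation equations of `π` under the two kernels:
    (hB₁ : ∀ s, V₁ s = ∑ a, π s a * (R s a + γ * ∑ s', T₁ s a s' * V₁ s'))
    (hB₂ : ∀ s, V₂ s = ∑ a, π s a * (R s a + γ * ∑ s', T₂ s a s' * V₂ s'))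
    -- `ρ k` : state distribution after `k` steps of `(π, T₁)` from `s₀`:
    (ρ : ℕ → S → ℝ)
    (hρ0 : ∀ s, ρ 0 s = if s = s₀ then 1 else 0)
    (hρsucc : ∀ k s', ρ (k + 1) s' = ∑ s, ∑ a, ρ k s * π s a * T₁ s a s')
    -- `Z k` : expected return with the first `k` steps under `T₁`, the rest under `T₂`:
    (Z : ℕ → ℝ)
    (hZ : ∀ k, Z k = (∑ t ∈ Finset.range k, γ ^ t * ∑ s, ∑ a, ρ t s * π s a * R s a)
      + γ ^ k * ∑ s, ρ k s * V₂ s) :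
    HasSum (fun k => Z (k + 1) - Z k) (V₁ s₀ - V₂ s₀)
    ∧ ∀ k, Z (k + 1) - Z k = γ ^ (k + 1) * ∑ s, ∑ a, ρ k s * π s a *
        ((∑ s', T₁ s a s' * V₂ s') - (∑ s', T₂ s a s' * V₂ s')) := by
  -- basic facts about ρ and π
  have hρnn : ∀ k s, 0 ≤ ρ k s := by
    intro k
    induction k with
    | zero => intro s; rw [hρ0]; positivity
    | succ k ih =>
      intro s'
      rw [hρsucc]
      exact Finset.sum_nonneg fun s _ => Finset.sum_nonneg fun a _ =>
        mul_nonneg (mul_nonneg (ih s) ((hπ s).1 a)) ((hT₁ s a).1 s')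
  have hind : ∀ (f : S → ℝ), ∑ s, ρ 0 s * f s = f s₀ := by
    intro f
    simp only [hρ0, ite_mul, one_mul, zero_mul]
    simp [Finset.sum_ite_eq']
  have hρsum : ∀ k, ∑ s, ρ k s = 1 := by
    intro k
    induction k with
    | zero => simpa using hind (fun _ => 1)
    | succ k ih =>
      have h2 : ∀ s a, (∑ s', T₁ s a s') = 1 := fun s a => (hT₁ s a).2
      have h3 : ∀ s, ∑ a, ρ k s * π s a = ρ k s := fun s => by
        rw [← Finset.mul_sum, (hπ s).2, mul_one]
      calc ∑ s', ρ (k + 1) s'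
          = ∑ s', (∑ s, ∑ a, ρ k s * π s a * T₁ s a s') * 1 := by
            simp only [hρsucc, mul_one]
        _ = ∑ s, ∑ a, ρ k s * π s a * ∑ s', T₁ s a s' * 1 :=
            tvd_swap T₁ π (fun _ => 1) (ρ k)
        _ = 1 := by simp only [mul_one, h2, h3]; exact ih
  have hρle1 : ∀ k s, ρ k s ≤ 1 := fun k s => by
    rw [← hρsum k]; exact Finset.single_le_sum (fun s _ => hρnn k s) (Finset.mem_univ s)
  have hπle1 : ∀ s a, π s a ≤ 1 := fun s a => by
    rw [← (hπ s).2]; exact Finset.single_le_sum (fun a _ => (hπ s).1 a) (Finset.mem_univ a)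
  -- part 2 : the per-step identity
  have hsub : ∀ k, ∑ s, ∑ a, ρ k s * π s a *
        ((∑ s', T₁ s a s' * V₂ s') - (∑ s', T₂ s a s' * V₂ s'))
      = (∑ s, ∑ a, ρ k s * π s a * ∑ s', T₁ s a s' * V₂ s')
        - (∑ s, ∑ a, ρ k s * π s a * ∑ s', T₂ s a s' * V₂ s') := by
    intro k
    rw [← Finset.sum_sub_distrib]
    refine Finset.sum_congr rfl fun s _ => ?_
    rw [← Finset.sum_sub_distrib]
    exact Finset.sum_congr rfl fun a _ => by ring
  have hA1 : ∀ k, ∑ s', ρ (k + 1) s' * V₂ s'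
      = ∑ s, ∑ a, ρ k s * π s a * ∑ s', T₁ s a s' * V₂ s' := by
    intro k
    simp only [hρsucc]
    exact tvd_swap T₁ π V₂ (ρ k)
  have hZV₂ : ∀ k, ∑ s, ρ k s * V₂ s
      = (∑ s, ∑ a, ρ k s * π s a * R s a)
        + γ * ∑ s, ∑ a, ρ k s * π s a * ∑ s', T₂ s a s' * V₂ s' := by
    intro k
    rw [tvd_step T₂ R γ π V₂ hB₂ (ρ k), tvd_swap]
  have hZd : ∀ k, Z (k + 1) - Z k = γ ^ (k + 1) * ∑ s, ∑ a, ρ k s * π s a *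
      ((∑ s', T₁ s a s' * V₂ s') - (∑ s', T₂ s a s' * V₂ s')) := by
    intro k
    rw [hZ (k + 1), hZ k, Finset.sum_range_succ, hA1 k, hZV₂ k, hsub k]
    ring
  refine ⟨?_, hZd⟩
  -- invariant : V₁ s₀ in terms of partial rollouts
  have hV₁k : ∀ k, V₁ s₀ = (∑ t ∈ Finset.range k, γ ^ t * ∑ s, ∑ a, ρ t s * π s a * R s a)
      + γ ^ k * ∑ s, ρ k s * V₁ s := by
    intro k
    induction k with
    | zero => simp [hind V₁]
    | succ k ih =>
      have e : ∑ s, ρ k s * V₁ s = (∑ s, ∑ a, ρ k s * π s a * R s a)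
          + γ * ∑ s', ρ (k + 1) s' * V₁ s' := by
        rw [tvd_step T₁ R γ π V₁ hB₁ (ρ k)]
        congr 2
        exact (Finset.sum_congr rfl fun s' _ => by rw [hρsucc]).symm
      rw [Finset.sum_range_succ, ih, e]
      ring
  -- Z n → V₁ s₀
  have hZtend : Filter.Tendsto Z Filter.atTop (nhds (V₁ s₀)) := by
    rw [tendsto_iff_norm_sub_tendsto_zero]
    have hb : ∀ n, ‖Z n - V₁ s₀‖ ≤ γ ^ n * ∑ s, |V₂ s - V₁ s| := by
      intro n
      have e : Z n - V₁ s₀ = γ ^ n * ∑ s, ρ n s * (V₂ s - V₁ s) := by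
        have e2 : ∑ s, ρ n s * (V₂ s - V₁ s)
            = ∑ s, ρ n s * V₂ s - ∑ s, ρ n s * V₁ s := by
          rw [← Finset.sum_sub_distrib]
          exact Finset.sum_congr rfl fun s _ => by ring
        rw [hZ n, hV₁k n, e2]; ring
      rw [e, Real.norm_eq_abs, abs_mul, abs_pow, abs_of_nonneg hγ0]
      refine mul_le_mul_of_nonneg_left ?_ (pow_nonneg hγ0 n)
      calc |∑ s, ρ n s * (V₂ s - V₁ s)| ≤ ∑ s, |ρ n s * (V₂ s - V₁ s)| :=
            Finset.abs_sum_le_sum_abs _ _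
        _ ≤ ∑ s, |V₂ s - V₁ s| := Finset.sum_le_sum fun s _ => by
            rw [abs_mul, abs_of_nonneg (hρnn n s)]
            exact mul_le_of_le_one_left (abs_nonneg _) (hρle1 n s)
    refine squeeze_zero (fun n => norm_nonneg _) hb ?_
    simpa using (tendsto_pow_atTop_nhds_zero_of_lt_one hγ0 hγ1).mul_const
      (∑ s, |V₂ s - V₁ s|)
  -- summability
  obtain ⟨C, hC⟩ : ∃ C : ℝ, C = ∑ s, ∑ a,
      |(∑ s', T₁ s a s' * V₂ s') - (∑ s', T₂ s a s' * V₂ s')| := ⟨_, rfl⟩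
  have hsummable : Summable (fun k => Z (k + 1) - Z k) := by
    rw [← summable_abs_iff]
    refine Summable.of_nonneg_of_le (f := fun k => γ ^ (k + 1) * C)
      (fun k => abs_nonneg _) ?_ ?_
    · intro k
      rw [hZd k, abs_mul, abs_pow, abs_of_nonneg hγ0, hC]
      refine mul_le_mul_of_nonneg_left ?_ (pow_nonneg hγ0 _)
      calc |∑ s, ∑ a, ρ k s * π s a * ((∑ s', T₁ s a s' * V₂ s') - (∑ s', T₂ s a s' * V₂ s'))|
          ≤ ∑ s, |∑ a, ρ k s * π s a * ((∑ s', T₁ s a s' * V₂ s') - (∑ s', T₂ s a s' * V₂ s'))| :=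
            Finset.abs_sum_le_sum_abs _ _
        _ ≤ ∑ s, ∑ a, |(∑ s', T₁ s a s' * V₂ s') - (∑ s', T₂ s a s' * V₂ s')| := by
            refine Finset.sum_le_sum fun s _ => ?_
            calc |∑ a, ρ k s * π s a * ((∑ s', T₁ s a s' * V₂ s') - (∑ s', T₂ s a s' * V₂ s'))|
                ≤ ∑ a, |ρ k s * π s a * ((∑ s', T₁ s a s' * V₂ s') - (∑ s', T₂ s a s' * V₂ s'))| :=
                  Finset.abs_sum_le_sum_abs _ _
              _ ≤ ∑ a, |(∑ s', T₁ s a s' * V₂ s') - (∑ s', T₂ s a s' * V₂ s')| := by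
                  refine Finset.sum_le_sum fun a _ => ?_
                  rw [abs_mul, abs_of_nonneg (mul_nonneg (hρnn k s) ((hπ s).1 a))]
                  exact mul_le_of_le_one_left (abs_nonneg _)
                    (mul_le_one₀ (hρle1 k s) ((hπ s).1 a) (hπle1 s a))
    · have h := (((summable_geometric_of_lt_one hγ0 hγ1).mul_right C).mul_left γ)
      refine h.congr fun k => ?_
      ring
  rw [hsummable.hasSum_iff_tendsto_nat]
  have htel : ∀ n, ∑ i ∈ Finset.range n, (Z (i + 1) - Z i) = Z n - Z 0 :=
    fun n => Finset.sum_range_sub Z n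
  simp only [htel]
  have hZ0 : Z 0 = V₂ s₀ := by
    rw [hZ 0]; simp [hind V₂]
  simpa [hZ0] using hZtend.sub_const (Z 0)
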